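/- Let M₀ be a self-adjoint operator on L²((0,∞), r dr)² with M₀ ≥ 0, and suppose there exist ξ, η with M₀ξ = η, η ≥ 0 componentwise, η ≢ 0, such that every nonzero element ζ of ker(M₀) satisfies ζ > 0 or ζ < 0 componentwise everywhere (Perron–Frobenius property). Then ker(M₀) = {0}. (Proof: if M₀ζ = 0 with ζ > 0, then 0 = ⟨M₀ζ, ξ⟩ = ⟨ζ, η⟩ > 0, a contradiction.) -/

import Mathlib

/-!
If `M ζ = 0` and `M ξ = η`, symmetry gives `⟨ζ, η⟩ = ⟨M ζ, ξ⟩ = 0`. By the Perron–Frobenius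
property `ζ` or `-ζ` is strictly positive, so the continuous integrand `ζ · η` is non-negative
with vanishing integral against `r dr`; as `r dr` charges every open subset of `(0,∞)`, it
vanishes identically, forcing `η ≡ 0`.
-/

open Set MeasureTheory

/-- The measure `r dr` on `(0,∞)`. -/
noncomputable def rmeasure : Measure ℝ :=
  (volume.restrict (Set.Ioi (0:ℝ))).withDensity fun r => ENNReal.ofReal r

lemma rmeasure_pos_of_isOpen {U : Set ℝ} (hU : IsOpen U) (hU₀ : U ⊆ Ioi 0) (hne : U.Nonempty) :
    0 < rmeasure U := by
  have hdens : {r : ℝ | ENNReal.ofReal r ≠ 0} = Ioi 0 := by ext r; simp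
  rw [pos_iff_ne_zero, rmeasure, Ne, withDensity_apply_eq_zero' (by fun_prop), hdens,
    Measure.restrict_apply' measurableSet_Ioi, inter_right_comm, inter_self,
    inter_eq_right.2 hU₀]
  exact (hU.measure_pos volume hne).ne'

lemma ae_rmeasure_of_forall_mem_Ioi {p : ℝ → Prop} (h : ∀ r ∈ Ioi (0:ℝ), p r) :
    ∀ᵐ r ∂rmeasure, p r :=
  (withDensity_absolutelyContinuous _ _).ae_le <|
    (ae_restrict_iff' measurableSet_Ioi).2 (ae_of_all _ h)

lemma ContinuousOn.eq_zero_of_integral_eq_zero {X : Type*} [TopologicalSpace X]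
    [MeasurableSpace X] {μ : Measure X} {U : Set X} (hU : IsOpen U)
    (hμ : ∀ V, IsOpen V → V ⊆ U → V.Nonempty → 0 < μ V) {f : X → ℝ} (hf : ContinuousOn f U)
    (hf₀ : 0 ≤ᵐ[μ] f) (hfi : Integrable f μ) (h : ∫ x, f x ∂μ = 0) :
    ∀ x ∈ U, f x = 0 := by
  have hsupp : μ (Function.support f) = 0 :=
    (integral_eq_zero_iff_of_nonneg_ae hf₀ hfi).1 h
  by_contra! ⟨x, hxU, hx⟩
  have hV := hμ _ (hf.isOpen_inter_preimage hU isOpen_compl_singleton) inter_subset_left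
    ⟨x, hxU, hx⟩
  exact hV.ne' (measure_mono_null inter_subset_right hsupp)

lemma eq_zero_of_integral_pairing_eq_zero {ι : Type*} [Fintype ι] {ζ η : ℝ → ι → ℝ}
    (hζ : ∀ r ∈ Ioi (0:ℝ), ∀ k, 0 < ζ r k) (hη : ∀ r ∈ Ioi (0:ℝ), ∀ k, 0 ≤ η r k)
    (hζc : ∀ k, ContinuousOn (fun r => ζ r k) (Ioi 0))
    (hηc : ∀ k, ContinuousOn (fun r => η r k) (Ioi 0))
    (hint : Integrable (fun r => ∑ k, ζ r k * η r k) rmeasure)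
    (h : ∫ r, (∑ k, ζ r k * η r k) ∂rmeasure = 0) :
    ∀ r ∈ Ioi (0:ℝ), η r = 0 := by
  have hterm : ∀ r ∈ Ioi (0:ℝ), ∀ k, 0 ≤ ζ r k * η r k := fun r hr k =>
    mul_nonneg (hζ r hr k).le (hη r hr k)
  have hpair := ContinuousOn.eq_zero_of_integral_eq_zero isOpen_Ioi
    (fun V hV hV₀ hne => rmeasure_pos_of_isOpen hV hV₀ hne)
    (continuousOn_finsetSum _ fun k _ => (hζc k).mul (hηc k))
    (ae_rmeasure_of_forall_mem_Ioi fun r hr => Finset.sum_nonneg fun k _ => hterm r hr k)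
    hint h
  intro r hr
  funext k
  have hk := (Finset.sum_eq_zero_iff_of_nonneg fun k _ => hterm r hr k).1 (hpair r hr) k
    (Finset.mem_univ k)
  exact (mul_eq_zero.1 hk).resolve_left (hζ r hr k).ne'

theorem stmt16 (M : (ℝ → Fin 2 → ℝ) →ₗ[ℝ] (ℝ → Fin 2 → ℝ))
    -- symmetry of M₀ w.r.t. the L²(r dr) pairing:
    (hsym : ∀ u v : ℝ → Fin 2 → ℝ,
      (∫ r, (∑ k, M u r k * v r k) ∂rmeasure) = ∫ r, (∑ k, u r k * M v r k) ∂rmeasure)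
    (ξ η : ℝ → Fin 2 → ℝ)
    (hMξ : M ξ = η)
    (hηnonneg : ∀ r ∈ Ioi (0:ℝ), ∀ k, 0 ≤ η r k)
    (hηcont : ∀ k, ContinuousOn (fun r => η r k) (Ioi 0))
    (hηne : ∃ r ∈ Ioi (0:ℝ), η r ≠ 0)
    -- Perron–Frobenius property of kernel elements:
    (hPF : ∀ ζ : ℝ → Fin 2 → ℝ, M ζ = 0 → (∃ r ∈ Ioi (0:ℝ), ζ r ≠ 0) →
      (∀ r ∈ Ioi (0:ℝ), ∀ k, 0 < ζ r k) ∨ (∀ r ∈ Ioi (0:ℝ), ∀ k, ζ r k < 0))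
    -- continuity and integrability needed so that the pairings make sense:
    (hker_cont : ∀ ζ : ℝ → Fin 2 → ℝ, M ζ = 0 → ∀ k, ContinuousOn (fun r => ζ r k) (Ioi 0))
    (hker_int : ∀ ζ : ℝ → Fin 2 → ℝ, M ζ = 0 →
      Integrable (fun r => ∑ k, ζ r k * η r k) rmeasure) :
    ∀ ζ : ℝ → Fin 2 → ℝ, M ζ = 0 → ∀ r ∈ Ioi (0:ℝ), ζ r = 0 := by
  have hpair : ∀ ζ, M ζ = 0 → ∫ r, (∑ k, ζ r k * η r k) ∂rmeasure = 0 := by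
    intro ζ hζ
    simpa [hζ, hMξ] using (hsym ζ ξ).symm
  have hpos : ∀ ζ, M ζ = 0 → (∀ r ∈ Ioi (0:ℝ), ∀ k, 0 < ζ r k) → False := by
    intro ζ hζ hζpos
    obtain ⟨r₁, hr₁, hη₁⟩ := hηne
    exact hη₁ <| eq_zero_of_integral_pairing_eq_zero hζpos hηnonneg (hker_cont ζ hζ) hηcont
      (hker_int ζ hζ) (hpair ζ hζ) r₁ hr₁
  intro ζ hζ r₀ hr₀
  by_contra hζr₀
  rcases hPF ζ hζ ⟨r₀, hr₀, hζr₀⟩ with hζpos | hζneg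
  · exact hpos ζ hζ hζpos
  · exact hpos (-ζ) (by rw [map_neg, hζ, neg_zero]) fun r hr k => neg_pos.2 (hζneg r hr k)
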